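/- (Schur–Horn, easy direction) If X is a real symmetric n×n matrix with eigenvalues λ_1,...,λ_n and diagonal entries d_1,...,d_n, then the vector (d_1,...,d_n) is majorized by (λ_1,...,λ_n). -/

import Mathlib

/-! Write `X = U D Uᵀ` with `U` orthogonal and `D` the diagonal of eigenvalues. Then
`X i i = ∑ j, U i j ^ 2 * D j j`, and the matrix `(U i j ^ 2)` is doubly stochastic. By Birkhoff's
theorem it is a convex combination of permutation matrices, and for a permuted vector any `k`
entries sum to at most the `k` largest entries of the original, so the same bound holds for the
diagonal. -/

/-- Sum of the `k` smallest entries of `x`: the minimum of `∑ i ∈ s, x i`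
over subsets `s` of cardinality `k`. -/
noncomputable def smallSum {n : ℕ} (x : Fin n → ℝ) (k : ℕ) : ℝ :=
  sInf ((fun s : Finset (Fin n) => ∑ i ∈ s, x i) '' {s | s.card = k})

/-- Sum of the `k` largest entries of `x`. -/
noncomputable def largeSum {n : ℕ} (x : Fin n → ℝ) (k : ℕ) : ℝ :=
  sSup ((fun s : Finset (Fin n) => ∑ i ∈ s, x i) '' {s | s.card = k})

/-- `x` is majorized by `y` (`x ≼ y`). -/
def Majorized {n : ℕ} (x y : Fin n → ℝ) : Prop :=
  (∀ k, k ≤ n → largeSum x k ≤ largeSum y k) ∧ ∑ i, x i = ∑ i, y i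

/-- `x ≼^w y`: weak majorization from above. -/
def WeakMajAbove {n : ℕ} (x y : Fin n → ℝ) : Prop :=
  ∀ k, 1 ≤ k → k ≤ n → smallSum y k ≤ smallSum x k

/-- `x ≺^w y`: strict weak majorization from above. -/
def StrictWeakMajAbove {n : ℕ} (x y : Fin n → ℝ) : Prop :=
  ∀ k, 1 ≤ k → k ≤ n → smallSum y k < smallSum x k

open Finset Matrix

section Majorization

variable {n : ℕ}

lemma sum_le_largeSum (x : Fin n → ℝ) (s : Finset (Fin n)) : ∑ i ∈ s, x i ≤ largeSum x #s :=
  le_csSup ((Set.toFinite _).image _).bddAbove ⟨s, rfl, rfl⟩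

lemma largeSum_le {x : Fin n → ℝ} {k : ℕ} {c : ℝ} (hk : k ≤ n)
    (h : ∀ s : Finset (Fin n), #s = k → ∑ i ∈ s, x i ≤ c) : largeSum x k ≤ c := by
  obtain ⟨s, -, hs⟩ := exists_subset_card_eq (s := (univ : Finset (Fin n))) (by simpa using hk)
  exact csSup_le ⟨_, s, hs, rfl⟩ (by rintro _ ⟨s, hs, rfl⟩; exact h s hs)

lemma sum_comp_perm_le_largeSum (x : Fin n → ℝ) (σ : Equiv.Perm (Fin n)) (s : Finset (Fin n)) :
    ∑ i ∈ s, x (σ i) ≤ largeSum x #s := by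
  simpa [sum_map] using sum_le_largeSum x (s.map σ.toEmbedding)

lemma sum_mulVec_le_largeSum {M : Matrix (Fin n) (Fin n) ℝ} (hM : M ∈ doublyStochastic ℝ (Fin n))
    (x : Fin n → ℝ) (s : Finset (Fin n)) : ∑ i ∈ s, (M *ᵥ x) i ≤ largeSum x #s := by
  obtain ⟨w, hw_nonneg, hw_sum, rfl⟩ := exists_eq_sum_perm_of_mem_doublyStochastic hM
  calc ∑ i ∈ s, ((∑ σ, w σ • σ.permMatrix ℝ) *ᵥ x) i = ∑ σ, w σ * ∑ i ∈ s, x (σ i) := by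
        simp [sum_mulVec, smul_mulVec, permMatrix_mulVec, mul_sum, sum_comm (s := s)]
    _ ≤ ∑ σ, w σ * largeSum x #s := by
        gcongr with σ
        exacts [hw_nonneg σ, sum_comp_perm_le_largeSum x σ s]
    _ = largeSum x #s := by rw [← sum_mul, hw_sum, one_mul]

theorem majorized_mulVec_of_mem_doublyStochastic {M : Matrix (Fin n) (Fin n) ℝ}
    (hM : M ∈ doublyStochastic ℝ (Fin n)) (x : Fin n → ℝ) : Majorized (M *ᵥ x) x :=
  ⟨fun _ hk => largeSum_le hk fun s hs => hs ▸ sum_mulVec_le_largeSum hM x s,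
    sum_mulVec_of_mem_doublyStochastic hM⟩

end Majorization

lemma exists_perm_eq_comp_of_map_univ_eq {ι α : Type*} [Fintype ι] {f g : ι → α}
    (h : univ.val.map f = univ.val.map g) : ∃ σ : Equiv.Perm ι, f = g ∘ σ := by
  classical
  have hfiber (a : α) : Fintype.card {i // f i = a} = Fintype.card {i // g i = a} := by
    simpa [Fintype.card_subtype, Multiset.count_map, eq_comm, card_def] using
      congr_arg (Multiset.count a) h
  exact ⟨Equiv.ofFiberEquiv fun a => Fintype.equivOfCardEq (hfiber a),
    funext fun i => (Equiv.ofFiberEquiv_map _ i).symm⟩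

section Unitary

variable {𝕜 ι : Type*} [RCLike 𝕜] [Fintype ι] [DecidableEq ι]

lemma sum_norm_sq_row_of_mem_unitaryGroup {U : Matrix ι ι 𝕜} (hU : U ∈ unitaryGroup ι 𝕜)
    (i : ι) : ∑ j, ‖U i j‖ ^ 2 = 1 := by
  have h := congr_fun (congr_fun (mem_unitaryGroup_iff.mp hU) i) i
  simp only [mul_apply, star_apply, RCLike.star_def, RCLike.mul_conj, one_apply_eq] at h
  exact_mod_cast h

lemma of_norm_sq_mem_doublyStochastic {U : Matrix ι ι 𝕜} (hU : U ∈ unitaryGroup ι 𝕜) :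
    of (fun i j => ‖U i j‖ ^ 2) ∈ doublyStochastic ℝ ι := by
  refine mem_doublyStochastic_iff_sum.mpr ⟨fun _ _ => sq_nonneg _,
    sum_norm_sq_row_of_mem_unitaryGroup hU, fun j => ?_⟩
  simpa [star_apply] using sum_norm_sq_row_of_mem_unitaryGroup (Unitary.star_mem hU) j

lemma Matrix.IsHermitian.re_diag_eq_mulVec_eigenvalues {A : Matrix ι ι 𝕜} (hA : A.IsHermitian) :
    (fun i => RCLike.re (A i i)) =
      of (fun i j => ‖(hA.eigenvectorUnitary : Matrix ι ι 𝕜) i j‖ ^ 2) *ᵥ hA.eigenvalues := by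
  ext i
  conv_lhs => rw [hA.spectral_theorem]
  simp only [Unitary.conjStarAlgAut_apply, mul_apply (M := _ * _), mul_diagonal, star_apply,
    RCLike.star_def, Function.comp_apply, mulVec, dotProduct, of_apply, map_sum]
  refine sum_congr rfl fun j _ => ?_
  rw [mul_right_comm, RCLike.mul_conj, ← RCLike.ofReal_pow, RCLike.re_ofReal_mul, RCLike.ofReal_re]

end Unitary

open Polynomial in
lemma Matrix.IsHermitian.map_univ_eq_eigenvalues_of_charpoly_eq {n : Type*} [Fintype n]
    [DecidableEq n] {A : Matrix n n ℝ} (hA : A.IsHermitian) {lam : n → ℝ}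
    (h : A.charpoly = ∏ i, (X - C (lam i))) : univ.val.map lam = univ.val.map hA.eigenvalues := by
  have hroots : (∏ i, (X - C (lam i))).roots = univ.val.map lam := by
    rw [roots_prod _ _ (prod_ne_zero_iff.mpr fun i _ => X_sub_C_ne_zero _)]
    simp
  rw [← h, hA.roots_charpoly_eq_eigenvalues, RCLike.ofReal_real_eq_id, Function.id_comp] at hroots
  exact hroots.symm

/-- Schur-Horn, easy direction: the diagonal of a real symmetric matrix is majorized by
its vector of eigenvalues. -/
theorem schur_horn_easy {n : ℕ} (X : Matrix (Fin n) (Fin n) ℝ) (hX : X.IsSymm)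
    (lam : Fin n → ℝ)
    (hlam : X.charpoly = ∏ i, (Polynomial.X - Polynomial.C (lam i))) :
    Majorized (fun i => X i i) lam := by
  have hH : X.IsHermitian := isHermitian_iff_isSymm.mpr hX
  obtain ⟨σ, hσ⟩ := exists_perm_eq_comp_of_map_univ_eq
    (hH.map_univ_eq_eigenvalues_of_charpoly_eq hlam).symm
  set M := of fun i j => ‖(hH.eigenvectorUnitary : Matrix (Fin n) (Fin n) ℝ) i j‖ ^ 2
  have hdiag : (fun i => X i i) = (M * σ.permMatrix ℝ) *ᵥ lam := by
    rw [← mulVec_mulVec, permMatrix_mulVec, ← hσ, ← hH.re_diag_eq_mulVec_eigenvalues]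
    simp only [RCLike.re_to_real]
  rw [hdiag]
  exact majorized_mulVec_of_mem_doublyStochastic
    (mul_mem (of_norm_sq_mem_doublyStochastic hH.eigenvectorUnitary.2)
      permMatrix_mem_doublyStochastic) lam
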